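/- Let $M>1$, $C>0$, $n\geq 2$, and let $(I_m)_{m\geq 0}$ be a sequence of nonnegative reals satisfying $I_m \leq C\, 2^{8m}\,\big(I_{m-2}^{1+\frac{2}{n}} + I_{m-1}^{1/2} I_{m-2}^{\frac12+\frac1n}\big)$ for all $m\geq 2$. Then there exist $\alpha_0>0$ and $M>1$ (for instance $M=2^{8n}$ and $\alpha_0 = C^{-n/2} 2^{-8n(n+2)}$) such that if $I_0\leq \alpha_0$ and $I_1\leq \alpha_0 M^{-1}$, then $I_m \leq \alpha_0 M^{-m}$ for all $m\geq 0$. -/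
import Mathlib


/-- Two-step De Giorgi-type recursive iteration inequality: geometric decay by induction. -/
theorem stmt_1 (n : ℕ) (hn : 2 ≤ n) (C : ℝ) (hC : 0 < C) (I : ℕ → ℝ)
    (hI : ∀ m, 0 ≤ I m)
    (hrec : ∀ m : ℕ, 2 ≤ m →
      I m ≤ C * 2 ^ (8 * m) *
        ((I (m - 2)) ^ ((1 : ℝ) + 2 / n)
          + (I (m - 1)) ^ ((1 : ℝ) / 2) * (I (m - 2)) ^ ((1 : ℝ) / 2 + 1 / n))) :
    ∃ α₀ : ℝ, 0 < α₀ ∧ ∃ M : ℝ, 1 < M ∧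
      (I 0 ≤ α₀ → I 1 ≤ α₀ * M⁻¹ → ∀ m : ℕ, I m ≤ α₀ * M ^ (-(m : ℝ))) := by
  have hn0 : (n : ℝ) ≠ 0 := by positivity
  set N : ℝ := (n : ℝ) with hNdef
  set D : ℝ := max 1 (2 * C) with hDdef
  have hD1 : (1 : ℝ) ≤ D := le_max_left _ _
  have hDC : 2 * C ≤ D := le_max_right _ _
  have hD0 : (0 : ℝ) < D := lt_of_lt_of_le one_pos hD1
  set B : ℝ := D * 2 ^ (16 * (n + 1)) with hBdef
  have hB0 : (0 : ℝ) < B := by positivity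
  have hB1 : (1 : ℝ) ≤ B := by
    have h2 : (1 : ℝ) ≤ 2 ^ (16 * (n + 1)) := one_le_pow₀ one_le_two
    calc (1 : ℝ) = 1 * 1 := by ring
      _ ≤ D * 2 ^ (16 * (n + 1)) := by
          apply mul_le_mul hD1 h2 zero_le_one hD0.le
  set α : ℝ := (B⁻¹) ^ n with hαdef
  have hα0 : (0 : ℝ) < α := by positivity
  set r : ℝ := ((2 : ℝ) ^ (8 * n))⁻¹ with hrdef
  have hr0 : (0 : ℝ) < r := by positivity
  have hr1 : r ≤ 1 := by
    rw [hrdef]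
    exact inv_le_one_of_one_le₀ (one_le_pow₀ one_le_two)
  refine ⟨α, hα0, (2 : ℝ) ^ (8 * n), ?_, ?_⟩
  · exact one_lt_pow₀ one_lt_two (by omega)
  intro h0 h1
  have hrpow : ∀ k : ℕ, ((2 : ℝ) ^ (8 * n)) ^ (-(k : ℝ)) = r ^ k := by
    intro k
    rw [Real.rpow_neg (by positivity), Real.rpow_natCast, ← inv_pow]
  -- helper: (x^n)^(k/N) = x^k for 0 ≤ x
  have H : ∀ x : ℝ, 0 ≤ x → ∀ k : ℕ, (x ^ n) ^ ((k : ℝ) / N) = x ^ k := by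
    intro x hx k
    rw [← Real.rpow_natCast x n, ← Real.rpow_mul hx,
      show (n : ℝ) * ((k : ℝ) / N) = (k : ℝ) by rw [hNdef]; field_simp,
      Real.rpow_natCast]
  have hα2N : α ^ ((2 : ℝ) / N) = (B ^ 2)⁻¹ := by
    have := H B⁻¹ (by positivity) 2
    push_cast at this
    rw [hαdef, this, inv_pow]
  have hα1N : α ^ ((1 : ℝ) / N) = B⁻¹ := by
    have := H B⁻¹ (by positivity) 1
    push_cast at this
    rw [hαdef, this, pow_one]
  have hrk : ∀ k : ℕ, r ^ k = ((2 : ℝ)⁻¹ ^ (8 * k)) ^ n := by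
    intro k
    rw [hrdef, ← inv_pow, ← pow_mul, ← pow_mul]
    congr 1
    ring
  have hrk2N : ∀ k : ℕ, (r ^ k) ^ ((2 : ℝ) / N) = ((2 : ℝ) ^ (16 * k))⁻¹ := by
    intro k
    have := H ((2 : ℝ)⁻¹ ^ (8 * k)) (by positivity) 2
    push_cast at this
    rw [hrk k, this, ← pow_mul, ← inv_pow]
    congr 1
    ring
  have hrk1N : ∀ k : ℕ, (r ^ k) ^ ((1 : ℝ) / N) = ((2 : ℝ) ^ (8 * k))⁻¹ := by
    intro k
    have := H ((2 : ℝ)⁻¹ ^ (8 * k)) (by positivity) 1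
    push_cast at this
    rw [hrk k, this, pow_one, ← inv_pow]
  have hr2 : r ^ 2 = ((2 : ℝ) ^ (16 * n))⁻¹ := by
    rw [hrdef, inv_pow, ← pow_mul]
    congr 2
    ring
  -- the two scalar inequalities
  have hBsq : B ^ 2 = D ^ 2 * 2 ^ (32 * (n + 1)) := by
    rw [hBdef, mul_pow, ← pow_mul]
    congr 2
    ring
  have hDD : D ≤ D ^ 2 := by nlinarith
  have S1 : ∀ k : ℕ, C * 2 ^ (8 * (k + 2)) * ((B ^ 2)⁻¹ * ((2 : ℝ) ^ (16 * k))⁻¹)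
      ≤ 1 / 2 * r ^ 2 := by
    intro k
    have h16 : (2 : ℝ) ^ (8 * k) * ((2 : ℝ) ^ (16 * k))⁻¹ ≤ 1 := by
      rw [show 16 * k = 8 * k + 8 * k by ring, pow_add, mul_inv, ← mul_assoc,
        mul_inv_cancel₀ (by positivity)]
      rw [one_mul]
      exact inv_le_one_of_one_le₀ (one_le_pow₀ one_le_two)
    have key : C * 2 ^ 16 * (B ^ 2)⁻¹ ≤ 1 / 2 * ((2 : ℝ) ^ (16 * n))⁻¹ := by
      rw [show C * 2 ^ 16 * (B ^ 2)⁻¹ = (C * 2 ^ 16) / (B ^ 2) by ring,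
        show (1 : ℝ) / 2 * ((2 : ℝ) ^ (16 * n))⁻¹ = 1 / (2 * 2 ^ (16 * n)) by ring,
        div_le_div_iff₀ (by positivity) (by positivity), one_mul]
      calc C * 2 ^ 16 * (2 * 2 ^ (16 * n)) = (2 * C) * 2 ^ (16 * (n + 1)) := by
            rw [show 16 * (n + 1) = 16 * n + 16 by ring, pow_add]; ring
        _ ≤ D ^ 2 * 2 ^ (32 * (n + 1)) := by
            apply mul_le_mul (hDC.trans hDD)
              (pow_le_pow_right₀ one_le_two (by omega)) (by positivity) (by positivity)
        _ = B ^ 2 := hBsq.symm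
    calc C * 2 ^ (8 * (k + 2)) * ((B ^ 2)⁻¹ * ((2 : ℝ) ^ (16 * k))⁻¹)
        = (C * 2 ^ 16 * (B ^ 2)⁻¹) * ((2 : ℝ) ^ (8 * k) * ((2 : ℝ) ^ (16 * k))⁻¹) := by
          rw [show 8 * (k + 2) = 8 * k + 16 by ring, pow_add]; ring
      _ ≤ (C * 2 ^ 16 * (B ^ 2)⁻¹) * 1 := by
          apply mul_le_mul_of_nonneg_left h16 (by positivity)
      _ = C * 2 ^ 16 * (B ^ 2)⁻¹ := mul_one _
      _ ≤ 1 / 2 * ((2 : ℝ) ^ (16 * n))⁻¹ := key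
      _ = 1 / 2 * r ^ 2 := by rw [hr2]
  have S2 : ∀ k : ℕ, C * 2 ^ (8 * (k + 2)) * (B⁻¹ * ((2 : ℝ) ^ (8 * k))⁻¹)
      ≤ 1 / 2 * r ^ 2 := by
    intro k
    have key : C * 2 ^ 16 * B⁻¹ ≤ 1 / 2 * ((2 : ℝ) ^ (16 * n))⁻¹ := by
      rw [show C * 2 ^ 16 * B⁻¹ = (C * 2 ^ 16) / B by ring,
        show (1 : ℝ) / 2 * ((2 : ℝ) ^ (16 * n))⁻¹ = 1 / (2 * 2 ^ (16 * n)) by ring,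
        div_le_div_iff₀ (by positivity) (by positivity), one_mul]
      calc C * 2 ^ 16 * (2 * 2 ^ (16 * n)) = (2 * C) * 2 ^ (16 * (n + 1)) := by
            rw [show 16 * (n + 1) = 16 * n + 16 by ring, pow_add]; ring
        _ ≤ D * 2 ^ (16 * (n + 1)) := by
            apply mul_le_mul_of_nonneg_right hDC (by positivity)
        _ = B := hBdef.symm
    calc C * 2 ^ (8 * (k + 2)) * (B⁻¹ * ((2 : ℝ) ^ (8 * k))⁻¹)
        = (C * 2 ^ 16 * B⁻¹) * ((2 : ℝ) ^ (8 * k) * ((2 : ℝ) ^ (8 * k))⁻¹) := by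
          rw [show 8 * (k + 2) = 8 * k + 16 by ring, pow_add]; ring
      _ = C * 2 ^ 16 * B⁻¹ := by rw [mul_inv_cancel₀ (by positivity), mul_one]
      _ ≤ 1 / 2 * ((2 : ℝ) ^ (16 * n))⁻¹ := key
      _ = 1 / 2 * r ^ 2 := by rw [hr2]
  -- main two-step induction
  have key : ∀ k : ℕ, I k ≤ α * r ^ k ∧ I (k + 1) ≤ α * r ^ (k + 1) := by
    intro k
    induction k with
    | zero =>
      constructor
      · simpa using h0
      · simpa [pow_one] using h1
    | succ k ih =>
      refine ⟨ih.2, ?_⟩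
      have hrec' := hrec (k + 2) (by omega)
      have e2 : k + 2 - 2 = k := by omega
      have e1 : k + 2 - 1 = k + 1 := by omega
      rw [e2, e1] at hrec'
      have hp1 : (0 : ℝ) ≤ (1 : ℝ) + 2 / N := by positivity
      have hp2 : (0 : ℝ) ≤ (1 : ℝ) / 2 + 1 / N := by positivity
      have hpos : (0 : ℝ) < α * r ^ k := by positivity
      have hpos1 : (0 : ℝ) < α * r ^ (k + 1) := by positivity
      -- G1 : first term bound
      have eG1 : (α * r ^ k) ^ ((1 : ℝ) + 2 / N)
          = (α * r ^ k) * (α ^ ((2 : ℝ) / N) * (r ^ k) ^ ((2 : ℝ) / N)) := by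
        rw [Real.rpow_add hpos, Real.rpow_one,
          Real.mul_rpow hα0.le (by positivity)]
      have G1 : C * 2 ^ (8 * (k + 2)) * (α * r ^ k) ^ ((1 : ℝ) + 2 / N)
          ≤ 1 / 2 * (α * r ^ (k + 2)) := by
        rw [eG1, hα2N, hrk2N]
        calc C * 2 ^ (8 * (k + 2)) * ((α * r ^ k) * ((B ^ 2)⁻¹ * ((2:ℝ) ^ (16 * k))⁻¹))
            = (α * r ^ k) * (C * 2 ^ (8 * (k + 2)) * ((B ^ 2)⁻¹ * ((2:ℝ) ^ (16 * k))⁻¹)) := by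
              ring
          _ ≤ (α * r ^ k) * (1 / 2 * r ^ 2) :=
              mul_le_mul_of_nonneg_left (S1 k) hpos.le
          _ = 1 / 2 * (α * r ^ (k + 2)) := by rw [pow_add]; ring
      -- G2 : second term bound
      have esq : (r ^ (k + 1)) ^ ((1 : ℝ) / 2) * (r ^ k) ^ ((1 : ℝ) / 2)
          = r ^ k * r ^ ((1 : ℝ) / 2) := by
        rw [← Real.mul_rpow (by positivity) (by positivity), ← pow_add,
          show k + 1 + k = k * 2 + 1 by ring, pow_succ, pow_mul,
          Real.mul_rpow (by positivity) hr0.le]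
        congr 1
        rw [← Real.rpow_natCast (r ^ k) 2, ← Real.rpow_mul (by positivity)]
        norm_num
      have eG2 : (α * r ^ (k + 1)) ^ ((1 : ℝ) / 2) * (α * r ^ k) ^ ((1 : ℝ) / 2 + 1 / N)
          = (α * (r ^ k * r ^ ((1 : ℝ) / 2))) * (α ^ ((1 : ℝ) / N) * (r ^ k) ^ ((1 : ℝ) / N)) := by
        rw [Real.mul_rpow hα0.le (by positivity),
          Real.rpow_add hpos, Real.mul_rpow hα0.le (by positivity),
          Real.mul_rpow hα0.le (by positivity)]
        calc α ^ ((1:ℝ)/2) * (r ^ (k+1)) ^ ((1:ℝ)/2) *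
              (α ^ ((1:ℝ)/2) * (r ^ k) ^ ((1:ℝ)/2) * (α ^ ((1:ℝ)/N) * (r ^ k) ^ ((1:ℝ)/N)))
            = (α ^ ((1:ℝ)/2) * α ^ ((1:ℝ)/2)) *
              ((r ^ (k+1)) ^ ((1:ℝ)/2) * (r ^ k) ^ ((1:ℝ)/2)) *
              (α ^ ((1:ℝ)/N) * (r ^ k) ^ ((1:ℝ)/N)) := by ring
          _ = α * (r ^ k * r ^ ((1:ℝ)/2)) * (α ^ ((1:ℝ)/N) * (r ^ k) ^ ((1:ℝ)/N)) := by
              rw [← Real.rpow_add hα0, esq]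
              norm_num
      have hrhalf : r ^ ((1 : ℝ) / 2) ≤ 1 :=
        Real.rpow_le_one hr0.le hr1 (by norm_num)
      have G2 : C * 2 ^ (8 * (k + 2)) *
          ((α * r ^ (k + 1)) ^ ((1 : ℝ) / 2) * (α * r ^ k) ^ ((1 : ℝ) / 2 + 1 / N))
          ≤ 1 / 2 * (α * r ^ (k + 2)) := by
        rw [eG2, hα1N, hrk1N]
        calc C * 2 ^ (8 * (k + 2)) *
              ((α * (r ^ k * r ^ ((1:ℝ)/2))) * (B⁻¹ * ((2:ℝ) ^ (8 * k))⁻¹))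
            = (α * r ^ k) * r ^ ((1:ℝ)/2) *
              (C * 2 ^ (8 * (k + 2)) * (B⁻¹ * ((2:ℝ) ^ (8 * k))⁻¹)) := by ring
          _ ≤ (α * r ^ k) * 1 * (1 / 2 * r ^ 2) := by
              apply mul_le_mul _ (S2 k) (by positivity) (by positivity)
              calc (α * r ^ k) * r ^ ((1:ℝ)/2) ≤ (α * r ^ k) * 1 :=
                    mul_le_mul_of_nonneg_left hrhalf hpos.le
                _ = (α * r ^ k) * 1 := rfl
          _ = 1 / 2 * (α * r ^ (k + 2)) := by rw [pow_add]; ring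
      -- combine
      calc I (k + 2)
          ≤ C * 2 ^ (8 * (k + 2)) *
            ((I k) ^ ((1 : ℝ) + 2 / N)
              + (I (k + 1)) ^ ((1 : ℝ) / 2) * (I k) ^ ((1 : ℝ) / 2 + 1 / N)) := hrec'
        _ ≤ C * 2 ^ (8 * (k + 2)) *
            ((α * r ^ k) ^ ((1 : ℝ) + 2 / N)
              + (α * r ^ (k + 1)) ^ ((1 : ℝ) / 2) * (α * r ^ k) ^ ((1 : ℝ) / 2 + 1 / N)) := by
            apply mul_le_mul_of_nonneg_left _ (by positivity)
            apply add_le_add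
            · exact Real.rpow_le_rpow (hI _) ih.1 hp1
            · exact mul_le_mul (Real.rpow_le_rpow (hI _) ih.2 (by norm_num))
                (Real.rpow_le_rpow (hI _) ih.1 hp2)
                (Real.rpow_nonneg (hI _) _) (Real.rpow_nonneg hpos1.le _)
        _ = C * 2 ^ (8 * (k + 2)) * (α * r ^ k) ^ ((1 : ℝ) + 2 / N)
            + C * 2 ^ (8 * (k + 2)) *
              ((α * r ^ (k + 1)) ^ ((1 : ℝ) / 2) * (α * r ^ k) ^ ((1 : ℝ) / 2 + 1 / N)) := by
            ring
        _ ≤ 1 / 2 * (α * r ^ (k + 2)) + 1 / 2 * (α * r ^ (k + 2)) := add_le_add G1 G2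
        _ = α * r ^ (k + 2) := by ring
  intro m
  rw [hrpow m]
  exact (key m).1
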